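/- Let α be a nonnegative integer, M ≥ 0 and N > 0. Then the Sobolev-Laguerre polynomials are orthogonal with respect to the Sobolev-type inner product: for all integers n, m ≥ 0 with n ≠ m, (L_n^{α,M,N}, L_m^{α,M,N})_{w(α,M,N)} = 0. -/

import Mathlib

open Real MeasureTheory Finset

noncomputable section

/-- Pochhammer symbol `(a)_m = a (a+1) ⋯ (a+m-1)`. -/
def poch (a : ℝ) (m : ℕ) : ℝ := (ascPochhammer ℝ m).eval a

/-- Generalized Laguerre polynomial `L_n^a(x)`. -/
def lag (a : ℝ) (n : ℕ) (x : ℝ) : ℝ :=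
  ∑ k ∈ Finset.range (n + 1),
    ((-1 : ℝ) ^ k / (Nat.factorial k : ℝ)) *
      (poch (a + (k : ℝ) + 1) (n - k) / (Nat.factorial (n - k) : ℝ)) * x ^ k

/-- The component `T_n^a(x)` of the Sobolev-Laguerre polynomials. -/
def Tpoly (a : ℝ) (n : ℕ) (x : ℝ) : ℝ :=
  if n = 0 then 0 else
    -(poch (a + 2) (n - 1) / (Nat.factorial n : ℝ)) * x * lag (a + 2) (n - 1) x

/-- The component `U_n^a(x)` of the Sobolev-Laguerre polynomials. -/
def Upoly (a : ℝ) (n : ℕ) (x : ℝ) : ℝ :=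
  if n < 2 then 0 else
    (poch (a + 3) (n - 2) / ((a + 1) * (a + 3) * (Nat.factorial (n - 2) : ℝ))) *
      (x ^ 2 / ((n : ℝ) - 1) * lag (a + 4) (n - 2) x
        - (a + 2) * x * lag (a + 2) (n - 1) x
        - ((n : ℝ) + a + 1) * lag a n x)

/-- The component `V_n^a(x)` of the Sobolev-Laguerre polynomials. -/
def Vpoly (a : ℝ) (n : ℕ) (x : ℝ) : ℝ :=
  if n < 2 then 0 else
    (1 / (a + 1)) * (poch (a + 3) (n - 2) / (Nat.factorial (n - 1) : ℝ)) *
      (poch (a + 4) (n - 2) / (Nat.factorial n : ℝ)) * x ^ 2 * lag (a + 4) (n - 2) x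

/-- The Sobolev-Laguerre polynomial `L_n^{α,M,N}(x)`. -/
def sobLag (α : ℕ) (M N : ℝ) (n : ℕ) (x : ℝ) : ℝ :=
  lag (α : ℝ) n x + M * Tpoly (α : ℝ) n x + N * Upoly (α : ℝ) n x
    + M * N * Vpoly (α : ℝ) n x

/-- The classical Laguerre differential expression `𝓛^α y`. -/
def Lcl (α : ℕ) (y : ℝ → ℝ) (x : ℝ) : ℝ :=
  x * iteratedDeriv 2 y x + ((α : ℝ) + 1 - x) * deriv y x

/-- The Laguerre-type differential expression `𝓛̆_{2α+4} y` of order `2α+4`. -/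
def Lbreve (α : ℕ) (y : ℝ → ℝ) (x : ℝ) : ℝ :=
  ((-1 : ℝ) ^ (α + 1) / (Nat.factorial (α + 2) : ℝ)) * Real.exp x * x *
    iteratedDeriv (α + 2) (fun t => Real.exp (-t) *
      iteratedDeriv (α + 2) (fun s => s ^ (α + 1) * y s) t) x

/-- The expression `E y`. -/
def Eop (α : ℕ) (y : ℝ → ℝ) (x : ℝ) : ℝ :=
  -((α : ℝ) + 2) * Real.exp x * x *
    iteratedDeriv (α + 4) (fun t => Real.exp (-t) * t ^ 2 *
      iteratedDeriv (α + 4) (fun s => s ^ (α + 1) * y s) t) x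

/-- The expression `F y`. -/
def Fop (α : ℕ) (y : ℝ → ℝ) (x : ℝ) : ℝ :=
  ((α : ℝ) + 4) * Real.exp x * x *
    iteratedDeriv (α + 3) (fun t => Real.exp (-t) * (t + 2 * (α : ℝ) + 4) *
      iteratedDeriv (α + 3) (fun s => s ^ (α + 1) * y s) t) x

/-- The expression `G y`. -/
def Gop (α : ℕ) (y : ℝ → ℝ) (x : ℝ) : ℝ :=
  ((α : ℝ) + 1) * ((α : ℝ) + 3) * ((α : ℝ) + 4) * Real.exp x *
    iteratedDeriv (α + 2) (fun t => Real.exp (-t) * (t + 2 * (α : ℝ) + 4) *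
      iteratedDeriv (α + 2) (fun s => s ^ α * y s) t) x

/-- The differential expression `𝓛̃_{2α+8} y` of order `2α+8`. -/
def Ltilde (α : ℕ) (y : ℝ → ℝ) (x : ℝ) : ℝ :=
  ((-1 : ℝ) ^ α / (((α : ℝ) + 1) * (Nat.factorial (α + 4) : ℝ))) *
    (Eop α y x + Fop α y x + Gop α y x)

/-- The constant `q_j = (α+2-j)(α+3+j)/(α+2)`. -/
def qcoef (α j : ℕ) : ℝ := ((α : ℝ) + 2 - (j : ℝ)) * ((α : ℝ) + 3 + (j : ℝ)) / ((α : ℝ) + 2)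

/-- The expression `H_j y`. -/
def Hop (α j : ℕ) (y : ℝ → ℝ) (x : ℝ) : ℝ :=
  ((-1 : ℝ) ^ (α + j) / (((α : ℝ) + 1) * (Nat.factorial (α + 3 + j) : ℝ))) *
    Real.exp x * x *
    iteratedDeriv (α + 3 + j) (fun t => Real.exp (-t) * t ^ j * (t + qcoef α j) *
      iteratedDeriv (α + 3 + j) (fun s => s ^ (α + 1) * y s) t) x

/-- The differential expression `𝓛̂_{4α+10} y` of order `4α+10`. -/
def Lhat (α : ℕ) (y : ℝ → ℝ) (x : ℝ) : ℝ :=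
  ∑ j ∈ Finset.range (α + 3),
    (poch ((α : ℝ) + 3 - (j : ℝ)) (2 * j) /
      ((Nat.factorial j : ℝ) * (Nat.factorial (j + 1) : ℝ))) * Hop α j y x

/-- The Sobolev-Laguerre differential operator `𝓛^{α,M,N}`. -/
def LsobOp (α : ℕ) (M N : ℝ) (y : ℝ → ℝ) (x : ℝ) : ℝ :=
  Lcl α y x + M * Lbreve α y x + N * Ltilde α y x + M * N * Lhat α y x

/-- The eigenvalue component `λ_n^{α,A}`. -/
def lamA (α n : ℕ) : ℝ := poch (n : ℝ) (α + 2) / (Nat.factorial (α + 2) : ℝ)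

/-- The eigenvalue component `λ_n^{α,B}`. -/
def lamB (α n : ℕ) : ℝ :=
  ((α : ℝ) + 2) / ((α : ℝ) + 1) * poch ((n : ℝ) - 2) (α + 4) / (Nat.factorial (α + 4) : ℝ)
    + 1 / ((α : ℝ) + 1) * poch ((n : ℝ) - 1) (α + 3) / (Nat.factorial (α + 3) : ℝ)

/-- The eigenvalue component `λ_n^{α,C}`. -/
def lamC (α n : ℕ) : ℝ :=
  (1 / ((α : ℝ) + 1)) * ∑ j ∈ Finset.range (α + 3),
    if (j : ℤ) ≤ (n : ℤ) - 2 then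
      (poch ((α : ℝ) + 3 - (j : ℝ)) (2 * j) /
        ((Nat.factorial j : ℝ) * (Nat.factorial (j + 1) : ℝ))) *
        poch ((n : ℝ) - 1 - (j : ℝ)) (j + α + 3) / (Nat.factorial (j + α + 3) : ℝ)
    else 0

/-- The combined eigenvalue `λ_n^{α,M,N}`. -/
def lamSob (α : ℕ) (M N : ℝ) (n : ℕ) : ℝ :=
  (n : ℝ) + M * lamA α n + N * lamB α n + M * N * lamC α n

/-- The Laguerre inner product `(f,g)_{w(α)}`. -/
def ipW (α : ℕ) (f g : ℝ → ℝ) : ℝ :=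
  (1 / (Nat.factorial α : ℝ)) *
    ∫ x in Set.Ioi (0 : ℝ), f x * g x * Real.exp (-x) * x ^ α

/-- The Sobolev-type inner product `(f,g)_{w(α,M,N)}`. -/
def ipSob (α : ℕ) (M N : ℝ) (f g : ℝ → ℝ) : ℝ :=
  ipW α f g + M * f 0 * g 0 + N * deriv f 0 * deriv g 0

/-- The integral `I₁^α(f,g)`. -/
def I1 (α : ℕ) (f g : ℝ → ℝ) : ℝ :=
  (1 / (Nat.factorial α : ℝ)) *
    ∫ x in Set.Ioi (0 : ℝ), Real.exp (-x) * x ^ (α + 1) * deriv f x * deriv g x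

/-- The integral `I₂^α(f,g)`. -/
def I2 (α : ℕ) (f g : ℝ → ℝ) : ℝ :=
  (1 / ((Nat.factorial α : ℝ) * (Nat.factorial (α + 2) : ℝ))) *
    ∫ x in Set.Ioi (0 : ℝ), Real.exp (-x) *
      iteratedDeriv (α + 2) (fun s => s ^ (α + 1) * f s) x *
      iteratedDeriv (α + 2) (fun s => s ^ (α + 1) * g s) x

/-- The integral `I₃,₁^α(f,g)`. -/
def I31 (α : ℕ) (f g : ℝ → ℝ) : ℝ :=
  (((α : ℝ) + 2) / ((Nat.factorial (α + 1) : ℝ) * (Nat.factorial (α + 4) : ℝ))) *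
    ∫ x in Set.Ioi (0 : ℝ), Real.exp (-x) * x ^ 2 *
      iteratedDeriv (α + 4) (fun s => s ^ (α + 1) * f s) x *
      iteratedDeriv (α + 4) (fun s => s ^ (α + 1) * g s) x

/-- The integral `I₃,₂^α(f,g)`. -/
def I32 (α : ℕ) (f g : ℝ → ℝ) : ℝ :=
  (1 / ((Nat.factorial (α + 1) : ℝ) * (Nat.factorial (α + 3) : ℝ))) *
    ∫ x in Set.Ioi (0 : ℝ), Real.exp (-x) * (x + 2 * (α : ℝ) + 4) *
      iteratedDeriv (α + 3) (fun s => s ^ (α + 1) * f s) x *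
      iteratedDeriv (α + 3) (fun s => s ^ (α + 1) * g s) x

/-- The integral `I₃,₃^α(f,g)`. -/
def I33 (α : ℕ) (f g : ℝ → ℝ) : ℝ :=
  (1 / ((Nat.factorial α : ℝ) * (Nat.factorial (α + 2) : ℝ))) *
    ∫ x in Set.Ioi (0 : ℝ), Real.exp (-x) * (x + 2 * (α : ℝ) + 4) *
      iteratedDeriv (α + 2) (fun s => s ^ α * f s) x *
      iteratedDeriv (α + 2) (fun s => s ^ α * g s) x

/-- The integral `I₄,j^α(f,g)`. -/
def I4 (α j : ℕ) (f g : ℝ → ℝ) : ℝ :=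
  (1 / ((Nat.factorial (α + 1) : ℝ) * (Nat.factorial (α + 3 + j) : ℝ))) *
    ∫ x in Set.Ioi (0 : ℝ), Real.exp (-x) * x ^ j * (x + qcoef α j) *
      iteratedDeriv (α + 3 + j) (fun s => s ^ (α + 1) * f s) x *
      iteratedDeriv (α + 3 + j) (fun s => s ^ (α + 1) * g s) x

/-- The boundary functional `(S₁ f)(0)`. -/
def S1 (α : ℕ) (f : ℝ → ℝ) : ℝ :=
  ∑ j ∈ Finset.range (α + 3),
    ((-1 : ℝ) ^ j * poch ((α : ℝ) + 3 - (j : ℝ)) (2 * j) * ((α : ℝ) + 2 + (j : ℝ)) /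
      ((Nat.factorial j : ℝ) * (Nat.factorial (j + 2) : ℝ))) * iteratedDeriv (j + 2) f 0

/-- The boundary functional `(S₂ f)(0)`. -/
def S2 (α : ℕ) (f : ℝ → ℝ) : ℝ :=
  ∑ j ∈ Finset.Icc 1 (α + 2),
    ((-1 : ℝ) ^ (j + 1) * poch ((α : ℝ) + 3 - (j : ℝ)) (2 * j) /
      ((Nat.factorial j : ℝ) * (Nat.factorial (j + 1) : ℝ))) * iteratedDeriv (j + 1) f 0

section AuxCore
open Set Polynomial


lemma integrableOn_exp_pow (k : ℕ) :
    IntegrableOn (fun x : ℝ => Real.exp (-x) * x ^ k) (Set.Ioi 0) := by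
  have h := Real.GammaIntegral_convergent (s := (k + 1 : ℝ)) (by positivity)
  refine h.congr_fun (fun x hx => ?_) measurableSet_Ioi
  simp only [add_sub_cancel_right, Real.rpow_natCast]

lemma integral_exp_pow (k : ℕ) :
    ∫ x in Set.Ioi (0 : ℝ), Real.exp (-x) * x ^ k = (Nat.factorial k : ℝ) := by
  have h := Real.Gamma_eq_integral (s := (k + 1 : ℝ)) (by positivity)
  rw [Real.Gamma_nat_eq_factorial] at h
  rw [h]
  refine setIntegral_congr_fun measurableSet_Ioi (fun x hx => ?_)
  simp only [add_sub_cancel_right, Real.rpow_natCast]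

def Salt (n : ℕ) (f : ℕ → ℝ) : ℝ :=
  ∑ i ∈ range (n+1), (-1 : ℝ)^i * (n.choose i) * f i

lemma Salt_succ (n : ℕ) (f : ℕ → ℝ) :
    Salt (n+1) f = Salt n f - Salt n (fun i => f (i+1)) := by
  unfold Salt
  rw [Finset.sum_range_succ' (fun i => (-1:ℝ)^i * ((n+1).choose i) * f i) (n+1)]
  rw [Finset.sum_range_succ' (fun i => (-1:ℝ)^i * (n.choose i) * f i) n]
  have key : ∀ i ∈ range (n+1), (-1:ℝ)^(i+1) * ((n+1).choose (i+1)) * f (i+1)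
      = -((-1:ℝ)^i * (n.choose i) * f (i+1)) + (-1:ℝ)^(i+1) * (n.choose (i+1)) * f (i+1) := by
    intro i _
    rw [Nat.choose_succ_succ]
    push_cast
    ring
  rw [Finset.sum_congr rfl key, Finset.sum_add_distrib]
  have h2 : ∑ i ∈ range (n+1), (-1:ℝ)^(i+1) * (n.choose (i+1)) * f (i+1)
      = ∑ i ∈ range n, (-1:ℝ)^(i+1) * (n.choose (i+1)) * f (i+1) := by
    rw [Finset.sum_range_succ, Nat.choose_succ_self]
    simp
  rw [h2]
  simp only [Nat.choose_zero_right, Nat.cast_one, pow_zero]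
  rw [Finset.sum_neg_distrib]
  ring

lemma Salt_sub (n : ℕ) (f g : ℕ → ℝ) :
    Salt n (fun i => f i - g i) = Salt n f - Salt n g := by
  unfold Salt
  rw [← Finset.sum_sub_distrib]
  exact Finset.sum_congr rfl (fun i _ => by ring)

lemma Salt_poly : ∀ (n : ℕ) (p : Polynomial ℝ), p.degree < n →
    Salt n (fun i => p.eval (i : ℝ)) = 0 := by
  intro n
  induction n with
  | zero =>
    intro p hp
    have : p = 0 := Polynomial.degree_eq_bot.mp (Nat.WithBot.lt_zero_iff.mp (by exact_mod_cast hp))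
    simp [this, Salt]
  | succ n ih =>
    intro p hp
    rcases eq_or_ne p 0 with rfl | hp0
    · rw [Salt_succ]; simp [Salt]
    · set q := p - p.comp (X + C 1) with hq
      have hnd : (p.comp (X + C 1)).natDegree = p.natDegree := by
        rw [Polynomial.natDegree_comp, Polynomial.natDegree_X_add_C, mul_one]
      have hlc : (p.comp (X + C 1)).leadingCoeff = p.leadingCoeff := by
        rw [Polynomial.leadingCoeff_comp (by rw [Polynomial.natDegree_X_add_C]; norm_num)]
        rw [Polynomial.leadingCoeff_X_add_C, one_pow, mul_one]
      have hcomp0 : p.comp (X + C 1) ≠ 0 := by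
        intro h
        apply hp0
        rw [← Polynomial.leadingCoeff_ne_zero] at hp0
        exact absurd (by rw [← hlc, h, Polynomial.leadingCoeff_zero]) hp0
      have hcompdeg : p.degree = (p.comp (X + C 1)).degree := by
        rw [Polynomial.degree_eq_natDegree hp0, Polynomial.degree_eq_natDegree hcomp0, hnd]
      have hqdeg : q.degree < p.degree :=
        Polynomial.degree_sub_lt hcompdeg hp0 hlc.symm
      have hqn : q.degree < n := by
        rcases eq_or_ne q 0 with h0 | h0
        · rw [h0, Polynomial.degree_zero]; exact bot_lt_iff_ne_bot.mpr (by simp)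
        · have h1 : q.natDegree < p.natDegree :=
            Polynomial.natDegree_lt_natDegree h0 hqdeg
          have h2 : p.natDegree < n + 1 :=
            (Polynomial.natDegree_lt_iff_degree_lt hp0).mpr (by exact_mod_cast hp)
          exact (Polynomial.natDegree_lt_iff_degree_lt h0).mp
            (Nat.lt_of_lt_of_le h1 (Nat.lt_succ_iff.mp h2))
      have heq : ∀ i : ℕ, p.eval ((i:ℝ)+1) = (p.comp (X + C 1)).eval (i : ℝ) := by
        intro i; simp [Polynomial.eval_comp]
      rw [Salt_succ]
      have hthis : Salt n (fun i => p.eval (((i+1 : ℕ)) : ℝ)) = Salt n (fun i => (p.comp (X + C 1)).eval (i:ℝ)) := by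
        unfold Salt
        refine Finset.sum_congr rfl (fun i _ => ?_)
        simp only
        push_cast
        rw [heq i]
      have hmain : Salt n (fun i => p.eval (i:ℝ)) - Salt n (fun i => (p.comp (X + C 1)).eval (i:ℝ))
          = Salt n (fun i => q.eval (i:ℝ)) := by
        rw [← Salt_sub]
        unfold Salt
        exact Finset.sum_congr rfl (fun i _ => by simp [hq])
      rw [hthis, hmain]
      exact ih q hqn

lemma Salt_congr (n : ℕ) {f g : ℕ → ℝ} (h : ∀ i, f i = g i) : Salt n f = Salt n g := by
  unfold Salt; exact Finset.sum_congr rfl (fun i _ => by rw [h i])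

lemma Salt_inv : ∀ (n : ℕ) (x : ℝ), 0 < x →
    Salt n (fun i => 1/(x+i)) = (Nat.factorial n : ℝ) / ∏ j ∈ range (n+1), (x+j) := by
  intro n
  induction n with
  | zero => intro x hx; simp [Salt]
  | succ n ih =>
    intro x hx
    rw [Salt_succ]
    rw [ih x hx]
    rw [Salt_congr n (g := fun i => 1/((x+1)+i)) (fun i => by push_cast; ring_nf)]
    rw [ih (x+1) (by linarith)]
    have hpos : ∀ (y : ℝ) (m : ℕ), 0 < y → 0 < ∏ j ∈ range m, (y+j) := by
      intro y m hy
      exact Finset.prod_pos (fun j _ => by positivity)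
    set P1 := ∏ j ∈ range (n+1), (x+j) with hP1
    set P2 := ∏ j ∈ range (n+1), ((x+1)+j) with hP2
    have h1 : (0:ℝ) < P1 := hpos x (n+1) hx
    have h2 : (0:ℝ) < P2 := hpos (x+1) (n+1) (by linarith)
    have key : ∏ j ∈ range (n+2), (x+j) = x * P2 := by
      rw [Finset.prod_range_succ' (fun j => x + (j:ℝ)) (n+1)]
      simp only [Nat.cast_zero, add_zero, hP2]
      rw [mul_comm]
      congr 1
      exact Finset.prod_congr rfl (fun j _ => by push_cast; ring)
    have key2 : ∏ j ∈ range (n+2), (x+j) = P1 * (x+(n+1)) := by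
      rw [show n+2 = (n+1)+1 from rfl, Finset.prod_range_succ, hP1]
      push_cast
      ring
    rw [key]
    have hfac : (Nat.factorial (n+1) : ℝ) = (n+1) * Nat.factorial n := by
      rw [Nat.factorial_succ]; push_cast; ring
    rw [hfac]
    have hx0 : x ≠ 0 := ne_of_gt hx
    have hrel : x * P2 = P1 * (x + ((n:ℝ)+1)) := by rw [← key, key2]
    rw [div_sub_div _ _ h1.ne' h2.ne', div_eq_div_iff (mul_pos h1 h2).ne' (mul_pos hx h2).ne']
    linear_combination ((Nat.factorial n : ℝ) * P2) * hrel


lemma poch_zero (a : ℝ) : poch a 0 = 1 := by simp [poch, ascPochhammer]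

lemma poch_succ (a : ℝ) (m : ℕ) : poch a (m+1) = poch a m * (a + m) := by
  unfold poch
  rw [ascPochhammer_succ_right]
  simp

lemma poch_nat (N : ℕ) : ∀ m : ℕ, poch ((N:ℝ)+1) m * (Nat.factorial N : ℝ) = (Nat.factorial (N+m) : ℝ) := by
  intro m
  induction m with
  | zero => simp [poch_zero]
  | succ m ih =>
    rw [poch_succ, show N + (m+1) = (N+m)+1 from rfl, Nat.factorial_succ]
    push_cast
    nlinarith [ih]

lemma fact_ne (k : ℕ) : (Nat.factorial k : ℝ) ≠ 0 :=
  Nat.cast_ne_zero.mpr (Nat.factorial_ne_zero k)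

lemma poch_nat_div (N m : ℕ) : poch ((N:ℝ)+1) m = (Nat.factorial (N+m) : ℝ) / (Nat.factorial N : ℝ) := by
  rw [eq_div_iff (fact_ne N)]; exact poch_nat N m

lemma prod_fact (N : ℕ) : ∀ n : ℕ, (∏ j ∈ range n, ((N:ℝ)+1+j)) * (Nat.factorial N : ℝ) = (Nat.factorial (N+n) : ℝ) := by
  intro n
  induction n with
  | zero => simp
  | succ n ih =>
    rw [Finset.prod_range_succ, show N + (n+1) = (N+n)+1 from rfl, Nat.factorial_succ]
    push_cast
    nlinarith [ih]

lemma fact_ratio_prod (a : ℕ) : ∀ b : ℕ, a ≤ b → ∀ i : ℕ,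
    (∏ t ∈ Finset.Ico a b, ((i:ℝ) + t + 1)) * (Nat.factorial (a+i) : ℝ) = (Nat.factorial (b+i) : ℝ) := by
  intro b hb
  induction b, hb using Nat.le_induction with
  | base => intro i; simp
  | succ b hb ih =>
    intro i
    rw [Finset.prod_Ico_succ_top hb, show b + 1 + i = (b+i)+1 from by omega, Nat.factorial_succ]
    push_cast
    nlinarith [ih i]

lemma SUM_ZERO (a n b : ℕ) (hab : a ≤ b) (h : b < a + n) :
    Salt n (fun i => (Nat.factorial (b+i) : ℝ) / (Nat.factorial (a+i) : ℝ)) = 0 := by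
  set p : Polynomial ℝ := ∏ t ∈ Finset.Ico a b, (X + C ((t:ℝ)+1)) with hp
  have hmonic : p.Monic := Polynomial.monic_prod_of_monic _ _ (fun t _ => Polynomial.monic_X_add_C _)
  have hdeg : p.natDegree = b - a := by
    have hnd := Polynomial.natDegree_prod_of_monic (Finset.Ico a b)
      (fun t => X + C ((t:ℝ)+1)) (fun t _ => Polynomial.monic_X_add_C _)
    rw [hp, hnd]
    simp only [Polynomial.natDegree_X_add_C]
    rw [Finset.sum_const, Nat.card_Ico, smul_eq_mul, mul_one]
  have heval : ∀ i : ℕ, p.eval (i:ℝ) = (Nat.factorial (b+i) : ℝ) / (Nat.factorial (a+i) : ℝ) := by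
    intro i
    rw [eq_div_iff (fact_ne (a+i)), hp, Polynomial.eval_prod]
    rw [← fact_ratio_prod a b hab i]
    congr 1
    exact Finset.prod_congr rfl (fun t _ => by simp; ring)
  rw [Salt_congr n (fun i => (heval i).symm)]
  apply Salt_poly
  rw [← Polynomial.natDegree_lt_iff_degree_lt hmonic.ne_zero, hdeg]
  omega

end AuxCore

section JintSec
open Set Polynomial

def Jint (a n b : ℕ) : ℝ :=
  ∫ x in Set.Ioi (0:ℝ), lag (a:ℝ) n x * (Real.exp (-x) * x ^ b)

lemma integrableOn_lag_weight (a : ℝ) (n b : ℕ) :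
    IntegrableOn (fun x : ℝ => lag a n x * (Real.exp (-x) * x ^ b)) (Set.Ioi 0) := by
  have : (fun x : ℝ => lag a n x * (Real.exp (-x) * x ^ b))
      = fun x : ℝ => ∑ k ∈ Finset.range (n+1),
        (((-1:ℝ)^k / (Nat.factorial k : ℝ)) * (poch (a + k + 1) (n-k) / (Nat.factorial (n-k) : ℝ)))
          * (Real.exp (-x) * x ^ (k + b)) := by
    funext x
    rw [lag, Finset.sum_mul]
    refine Finset.sum_congr rfl (fun k _ => ?_)
    rw [pow_add]
    ring
  rw [this]
  exact integrable_finset_sum _ (fun k _ => ((integrableOn_exp_pow (k+b)).const_mul _))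

lemma Jint_repr (a n b : ℕ) : Jint a n b
    = ∑ k ∈ Finset.range (n+1),
        (((-1:ℝ)^k / (Nat.factorial k : ℝ)) * (poch ((a:ℝ) + k + 1) (n-k) / (Nat.factorial (n-k) : ℝ)))
          * (Nat.factorial (k + b) : ℝ) := by
  unfold Jint
  have h1 : ∀ x ∈ Set.Ioi (0:ℝ), lag (a:ℝ) n x * (Real.exp (-x) * x ^ b)
      = ∑ k ∈ Finset.range (n+1),
        (((-1:ℝ)^k / (Nat.factorial k : ℝ)) * (poch ((a:ℝ) + k + 1) (n-k) / (Nat.factorial (n-k) : ℝ)))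
          * (Real.exp (-x) * x ^ (k + b)) := by
    intro x _
    rw [lag, Finset.sum_mul]
    refine Finset.sum_congr rfl (fun k _ => ?_)
    rw [pow_add]
    ring
  rw [setIntegral_congr_fun measurableSet_Ioi h1]
  rw [integral_finset_sum _ (fun k _ => ((integrableOn_exp_pow (k+b)).const_mul _))]
  refine Finset.sum_congr rfl (fun k _ => ?_)
  rw [MeasureTheory.integral_const_mul, integral_exp_pow]

lemma Jint_salt (a n b : ℕ) : Jint a n b
    = ((Nat.factorial (a+n) : ℝ) / (Nat.factorial n : ℝ))
      * Salt n (fun k => (Nat.factorial (b+k) : ℝ) / (Nat.factorial (a+k) : ℝ)) := by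
  rw [Jint_repr]
  unfold Salt
  rw [Finset.mul_sum]
  refine Finset.sum_congr rfl (fun k hk => ?_)
  have hk' : k ≤ n := Nat.lt_succ_iff.mp (Finset.mem_range.mp hk)
  have hp : poch ((a:ℝ) + k + 1) (n-k) = (Nat.factorial (a+n) : ℝ) / (Nat.factorial (a+k) : ℝ) := by
    have : ((a:ℝ) + k + 1) = ((a+k : ℕ) : ℝ) + 1 := by push_cast; ring
    rw [this, poch_nat_div, show a + k + (n - k) = a + n from by omega]
  have hch : ((n.choose k : ℕ) : ℝ) * (Nat.factorial k) * (Nat.factorial (n-k)) = (Nat.factorial n : ℝ) := by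
    exact_mod_cast congrArg (Nat.cast : ℕ → ℝ) (Nat.choose_mul_factorial_mul_factorial hk')
  have hcc : ((n.choose k : ℕ) : ℝ) = (Nat.factorial n : ℝ) / ((Nat.factorial k : ℝ) * (Nat.factorial (n-k) : ℝ)) := by
    rw [eq_div_iff (mul_ne_zero (fact_ne k) (fact_ne (n-k))), ← mul_assoc]
    exact hch
  rw [hp, show k + b = b + k from by omega, hcc]
  field_simp

lemma J_zero (a n b : ℕ) (hab : a ≤ b) (h : b < a + n) : Jint a n b = 0 := by
  rw [Jint_salt, SUM_ZERO a n b hab h, mul_zero]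

lemma J_a1 (a n : ℕ) : Jint (a+1) n a = (Nat.factorial a : ℝ) := by
  rw [Jint_salt]
  have h1 : Salt n (fun k => (Nat.factorial (a+k) : ℝ) / (Nat.factorial (a+1+k) : ℝ))
      = Salt n (fun k => 1 / (((a:ℝ)+1) + k)) := by
    refine Salt_congr n (fun k => ?_)
    rw [show a+1+k = (a+k)+1 from by omega, Nat.factorial_succ]
    rw [eq_div_iff (by positivity)]
    push_cast
    field_simp [fact_ne (a+k)]
    ring
  rw [h1, Salt_inv n ((a:ℝ)+1) (by positivity)]
  have h2 : ∏ j ∈ Finset.range (n+1), (((a:ℝ)+1) + j)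
      = (Nat.factorial (a+(n+1)) : ℝ) / (Nat.factorial a : ℝ) := by
    rw [eq_div_iff (fact_ne a)]
    exact prod_fact a (n+1)
  rw [h2, show a+1+n = a+(n+1) from by omega]
  have e1 := fact_ne (a+(n+1))
  have e2 := fact_ne n
  have e3 := fact_ne a
  field_simp

lemma J_a2 (a n : ℕ) : Jint (a+2) n a = (Nat.factorial a : ℝ) * (n+1) := by
  rw [Jint_salt]
  have h1 : Salt n (fun k => (Nat.factorial (a+k) : ℝ) / (Nat.factorial (a+2+k) : ℝ))
      = Salt n (fun k => 1 / (((a:ℝ)+1) + k) - 1 / (((a:ℝ)+2) + k)) := by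
    refine Salt_congr n (fun k => ?_)
    rw [show a+2+k = ((a+k)+1)+1 from by omega, Nat.factorial_succ, Nat.factorial_succ]
    have c1 : ((a:ℝ) + 1 + k) ≠ 0 := by positivity
    have c2 : ((a:ℝ) + 2 + k) ≠ 0 := by positivity
    have hfp : (0:ℝ) < (Nat.factorial (a+k) : ℝ) := Nat.cast_pos.mpr (Nat.factorial_pos _)
    push_cast
    rw [div_sub_div _ _ c1 c2]
    rw [div_eq_div_iff (by positivity) (by positivity)]
    ring
  rw [h1, Salt_sub, Salt_inv n ((a:ℝ)+1) (by positivity),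
    Salt_inv n ((a:ℝ)+2) (by positivity)]
  have h2 : ∏ j ∈ Finset.range (n+1), (((a:ℝ)+1) + j)
      = (Nat.factorial (a+n+1) : ℝ) / (Nat.factorial a : ℝ) := by
    rw [eq_div_iff (fact_ne a), show a+n+1 = a+(n+1) from by omega]
    exact prod_fact a (n+1)
  have h3 : ∏ j ∈ Finset.range (n+1), (((a:ℝ)+2) + j)
      = (Nat.factorial (a+n+2) : ℝ) / (Nat.factorial (a+1) : ℝ) := by
    rw [eq_div_iff (fact_ne (a+1)), show a+n+2 = (a+1)+(n+1) from by omega]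
    have := prod_fact (a+1) (n+1)
    rw [← this]
    congr 1
    exact Finset.prod_congr rfl (fun j _ => by push_cast; ring)
  rw [h2, h3, show a+2+n = a+n+2 from by omega]
  have e0 := fact_ne a
  have e1 := fact_ne (a+1)
  have e2 := fact_ne (a+n+1)
  have e3 := fact_ne (a+n+2)
  have e4 := fact_ne n
  have r1 : (Nat.factorial (a+n+2) : ℝ) = ((a:ℝ)+n+2) * (Nat.factorial (a+n+1)) := by
    rw [show a+n+2 = (a+n+1)+1 from by omega, Nat.factorial_succ]; push_cast; ring
  have r2 : (Nat.factorial (a+1) : ℝ) = ((a:ℝ)+1) * (Nat.factorial a) := by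
    rw [Nat.factorial_succ]; push_cast; ring
  rw [r1, r2]
  field_simp
  ring

end JintSec

section PointSec
open Set Polynomial

lemma integrableOn_sum_weight (c : ℕ → ℝ) (D b : ℕ) :
    MeasureTheory.IntegrableOn
      (fun x : ℝ => (∑ i ∈ Finset.range D, c i * x ^ i) * (Real.exp (-x) * x ^ b)) (Set.Ioi 0) := by
  have : (fun x : ℝ => (∑ i ∈ Finset.range D, c i * x ^ i) * (Real.exp (-x) * x ^ b))
      = fun x : ℝ => ∑ i ∈ Finset.range D, c i * (Real.exp (-x) * x ^ (i + b)) := by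
    funext x
    rw [Finset.sum_mul]
    exact Finset.sum_congr rfl (fun i _ => by rw [pow_add]; ring)
  rw [this]
  exact MeasureTheory.integrable_finset_sum _
    (fun i _ => ((integrableOn_exp_pow (i+b)).const_mul _))

lemma lag_zero (a : ℝ) (n : ℕ) : lag a n 0 = poch (a+1) n / (Nat.factorial n : ℝ) := by
  unfold lag
  rw [Finset.sum_eq_single_of_mem 0 (Finset.mem_range.mpr (Nat.succ_pos n))]
  · norm_num
  · intro k _ hk
    rw [zero_pow hk, mul_zero]

lemma hasDerivAt_lag (a : ℝ) (n : ℕ) (x : ℝ) :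
    HasDerivAt (lag a n) (∑ k ∈ Finset.range (n+1),
      ((-1:ℝ)^k / (Nat.factorial k : ℝ)) * (poch (a + k + 1) (n-k) / (Nat.factorial (n-k) : ℝ))
        * (k * x ^ (k-1))) x := by
  have : HasDerivAt (fun y : ℝ => ∑ k ∈ Finset.range (n+1),
      ((-1:ℝ)^k / (Nat.factorial k : ℝ)) * (poch (a + k + 1) (n-k) / (Nat.factorial (n-k) : ℝ)) * y ^ k)
      (∑ k ∈ Finset.range (n+1),
      ((-1:ℝ)^k / (Nat.factorial k : ℝ)) * (poch (a + k + 1) (n-k) / (Nat.factorial (n-k) : ℝ))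
        * (k * x ^ (k-1))) x :=
    HasDerivAt.fun_sum (fun k _ => (hasDerivAt_pow k x).const_mul _)
  exact this

lemma deriv_lag_zero (a : ℝ) (n : ℕ) (hn : 1 ≤ n) :
    deriv (lag a n) 0 = -(poch (a+2) (n-1) / (Nat.factorial (n-1) : ℝ)) := by
  rw [(hasDerivAt_lag a n 0).deriv]
  rw [Finset.sum_eq_single_of_mem 1 (Finset.mem_range.mpr (by omega))]
  · simp only [Nat.cast_one]
    rw [show a + 1 + 1 = a + 2 from by ring]
    norm_num
  · intro k _ hk
    rcases Nat.eq_zero_or_pos k with rfl | hk0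
    · norm_num
    · have : k - 1 ≠ 0 := by omega
      rw [zero_pow this]
      ring

lemma differentiable_lag (a : ℝ) (n : ℕ) (x : ℝ) : DifferentiableAt ℝ (lag a n) x :=
  (hasDerivAt_lag a n x).differentiableAt

lemma Tpoly_zero_val (a : ℝ) (n : ℕ) : Tpoly a n 0 = 0 := by
  unfold Tpoly
  split <;> simp

lemma Vpoly_zero_val (a : ℝ) (n : ℕ) : Vpoly a n 0 = 0 := by
  unfold Vpoly
  split <;> simp

lemma Upoly_zero_val (a : ℝ) (n : ℕ) (hn : 2 ≤ n) :
    Upoly a n 0 = (poch (a + 3) (n - 2) / ((a + 1) * (a + 3) * (Nat.factorial (n - 2) : ℝ)))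
      * (-(((n : ℝ) + a + 1) * (poch (a+1) n / (Nat.factorial n : ℝ)))) := by
  unfold Upoly
  rw [if_neg (by omega), lag_zero a n]
  ring

lemma hasDerivAt_T_zero (a : ℝ) (n : ℕ) (hn : 1 ≤ n) :
    HasDerivAt (Tpoly a n)
      (-(poch (a + 2) (n - 1) / (Nat.factorial n : ℝ)) * lag (a+2) (n-1) 0) 0 := by
  have h0 : HasDerivAt (fun x : ℝ => x * lag (a+2) (n-1) x) (lag (a+2) (n-1) 0) 0 := by
    have := (hasDerivAt_id (0:ℝ)).fun_mul (hasDerivAt_lag (a+2) (n-1) 0)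
    simpa using this
  have h1 := h0.const_mul (-(poch (a + 2) (n - 1) / (Nat.factorial n : ℝ)))
  have heq : (fun x : ℝ => -(poch (a + 2) (n - 1) / (Nat.factorial n : ℝ)) * (x * lag (a+2) (n-1) x))
      = Tpoly a n := by
    funext x
    unfold Tpoly
    rw [if_neg (by omega)]
    ring
  rw [heq] at h1
  exact h1

lemma hasDerivAt_V_zero (a : ℝ) (n : ℕ) : HasDerivAt (Vpoly a n) 0 0 := by
  rcases Nat.lt_or_ge n 2 with h | h
  · have heq : Vpoly a n = fun _ : ℝ => (0:ℝ) := by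
      funext x; unfold Vpoly; rw [if_pos h]
    rw [heq]
    exact hasDerivAt_const 0 0
  · set K := (1 / (a + 1)) * (poch (a + 3) (n - 2) / (Nat.factorial (n - 1) : ℝ)) *
      (poch (a + 4) (n - 2) / (Nat.factorial n : ℝ)) with hK
    have h0 : HasDerivAt (fun x : ℝ => K * x ^ 2 * lag (a+4) (n-2) x)
        ((K * (2 * 0)) * lag (a+4) (n-2) 0 + (K * 0 ^ 2) * (∑ k ∈ Finset.range (n-2+1),
          ((-1:ℝ)^k / (Nat.factorial k : ℝ)) * (poch ((a+4) + k + 1) ((n-2)-k) / (Nat.factorial ((n-2)-k) : ℝ))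
          * (k * (0:ℝ) ^ (k-1)))) 0 := by
      have hx2 : HasDerivAt (fun x : ℝ => K * x ^ 2) (K * (2 * 0)) 0 := by
        simpa using ((hasDerivAt_pow 2 (0:ℝ)).const_mul K)
      exact hx2.mul (hasDerivAt_lag (a+4) (n-2) 0)
    have heq : (fun x : ℝ => K * x ^ 2 * lag (a+4) (n-2) x) = Vpoly a n := by
      funext x; unfold Vpoly; rw [if_neg (by omega), hK]
    rw [heq] at h0
    simpa using h0

lemma hasDerivAt_U_zero (a : ℝ) (n : ℕ) (hn : 2 ≤ n) :
    HasDerivAt (Upoly a n)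
      ((poch (a + 3) (n - 2) / ((a + 1) * (a + 3) * (Nat.factorial (n - 2) : ℝ))) *
        (0 - (a + 2) * lag (a+2) (n-1) 0 - ((n : ℝ) + a + 1) * deriv (lag a n) 0)) 0 := by
  set K := poch (a + 3) (n - 2) / ((a + 1) * (a + 3) * (Nat.factorial (n - 2) : ℝ)) with hK
  have h1 : HasDerivAt (fun x : ℝ => x ^ 2 / ((n : ℝ) - 1) * lag (a+4) (n-2) x) 0 0 := by
    have hx2 : HasDerivAt (fun x : ℝ => x ^ 2 / ((n : ℝ) - 1)) ((2 * 0) / ((n:ℝ)-1)) 0 := by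
      simpa using ((hasDerivAt_pow 2 (0:ℝ)).div_const ((n:ℝ)-1))
    have := hx2.fun_mul (hasDerivAt_lag (a+4) (n-2) 0)
    simpa using this
  have h2 : HasDerivAt (fun x : ℝ => (a + 2) * x * lag (a+2) (n-1) x)
      ((a+2) * lag (a+2) (n-1) 0) 0 := by
    have hx : HasDerivAt (fun x : ℝ => (a + 2) * x) (a+2) 0 := by
      simpa using (hasDerivAt_id (0:ℝ)).const_mul (a+2)
    have := hx.fun_mul (hasDerivAt_lag (a+2) (n-1) 0)
    simpa using this
  have h3 : HasDerivAt (fun x : ℝ => ((n : ℝ) + a + 1) * lag a n x)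
      (((n:ℝ) + a + 1) * deriv (lag a n) 0) 0 := by
    have h := (hasDerivAt_lag a n 0).const_mul ((n:ℝ)+a+1)
    rwa [← (hasDerivAt_lag a n 0).deriv] at h
  have h4 := ((h1.fun_sub h2).fun_sub h3).const_mul K
  have heq : (fun x : ℝ => K * ((x ^ 2 / ((n : ℝ) - 1) * lag (a+4) (n-2) x)
      - ((a + 2) * x * lag (a+2) (n-1) x) - (((n : ℝ) + a + 1) * lag a n x))) = Upoly a n := by
    funext x; unfold Upoly; rw [if_neg (by omega), hK]
  rw [heq] at h4
  convert h4 using 1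

end PointSec

section PolySec
open Set

def PolyLe (f : ℝ → ℝ) (D : ℕ) : Prop :=
  ∃ c : ℕ → ℝ, ∀ x, f x = ∑ i ∈ Finset.range (D+1), c i * x ^ i

lemma polyLe_congr {f g : ℝ → ℝ} {D : ℕ} (h : ∀ x, f x = g x) (hg : PolyLe g D) : PolyLe f D := by
  obtain ⟨c, hc⟩ := hg
  exact ⟨c, fun x => (h x).trans (hc x)⟩

lemma polyLe_zero (D : ℕ) : PolyLe (fun _ => (0:ℝ)) D :=
  ⟨fun _ => 0, fun x => by simp⟩

lemma polyLe_lag (a : ℝ) (n : ℕ) : PolyLe (lag a n) n :=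
  ⟨fun k => ((-1 : ℝ) ^ k / (Nat.factorial k : ℝ)) *
      (poch (a + (k : ℝ) + 1) (n - k) / (Nat.factorial (n - k) : ℝ)), fun x => rfl⟩

lemma polyLe_const_mul {f : ℝ → ℝ} {D : ℕ} (K : ℝ) (hf : PolyLe f D) :
    PolyLe (fun x => K * f x) D := by
  obtain ⟨c, hc⟩ := hf
  refine ⟨fun i => K * c i, fun x => ?_⟩
  simp only
  rw [hc x, Finset.mul_sum]
  exact Finset.sum_congr rfl (fun i _ => by ring)

lemma polyLe_add {f g : ℝ → ℝ} {D : ℕ} (hf : PolyLe f D) (hg : PolyLe g D) :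
    PolyLe (fun x => f x + g x) D := by
  obtain ⟨c, hc⟩ := hf
  obtain ⟨d, hd⟩ := hg
  refine ⟨fun i => c i + d i, fun x => ?_⟩
  simp only
  rw [hc x, hd x, ← Finset.sum_add_distrib]
  exact Finset.sum_congr rfl (fun i _ => by ring)

lemma polyLe_sub {f g : ℝ → ℝ} {D : ℕ} (hf : PolyLe f D) (hg : PolyLe g D) :
    PolyLe (fun x => f x - g x) D := by
  obtain ⟨c, hc⟩ := hf
  obtain ⟨d, hd⟩ := hg
  refine ⟨fun i => c i - d i, fun x => ?_⟩
  simp only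
  rw [hc x, hd x, ← Finset.sum_sub_distrib]
  exact Finset.sum_congr rfl (fun i _ => by ring)

lemma polyLe_mul_x {f : ℝ → ℝ} {D : ℕ} (hf : PolyLe f D) :
    PolyLe (fun x => x * f x) (D+1) := by
  obtain ⟨c, hc⟩ := hf
  refine ⟨fun i => if i = 0 then 0 else c (i-1), fun x => ?_⟩
  simp only
  rw [hc x]
  calc x * ∑ i ∈ Finset.range (D+1), c i * x ^ i
      = ∑ i ∈ Finset.range (D+1), c i * x ^ (i+1) := by
        rw [Finset.mul_sum]; exact Finset.sum_congr rfl (fun i _ => by ring)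
    _ = ∑ i ∈ Finset.range (D+1+1), (if i = 0 then (0:ℝ) else c (i-1)) * x ^ i := by
        rw [Finset.sum_range_succ' (fun i => (if i = 0 then (0:ℝ) else c (i-1)) * x ^ i) (D+1)]
        simp

lemma polyLe_mono {f : ℝ → ℝ} {D E : ℕ} (hf : PolyLe f D) (h : D ≤ E) : PolyLe f E := by
  obtain ⟨c, hc⟩ := hf
  refine ⟨fun i => if i < D + 1 then c i else 0, fun x => ?_⟩
  rw [hc x]
  rw [← Finset.sum_subset (Finset.range_subset_range.mpr (by omega : D+1 ≤ E+1))]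
  · exact Finset.sum_congr rfl (fun i hi => by simp [Finset.mem_range.mp hi])
  · intro i _ hi
    have : ¬ i < D + 1 := fun h' => hi (Finset.mem_range.mpr h')
    simp [this]

lemma polyLe_T (α : ℕ) (n : ℕ) : PolyLe (Tpoly (α:ℝ) n) n := by
  rcases Nat.eq_zero_or_pos n with rfl | hn
  · exact polyLe_congr (fun x => by unfold Tpoly; rw [if_pos rfl]) (polyLe_zero 0)
  · have h1 := polyLe_mul_x (polyLe_lag ((α:ℝ)+2) (n-1))
    have h2 := polyLe_const_mul (-(poch ((α:ℝ) + 2) (n - 1) / (Nat.factorial n : ℝ))) h1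
    refine polyLe_congr (fun x => ?_) (polyLe_mono h2 (by omega))
    unfold Tpoly
    rw [if_neg (by omega)]
    ring

lemma polyLe_V (α : ℕ) (n : ℕ) : PolyLe (Vpoly (α:ℝ) n) n := by
  rcases Nat.lt_or_ge n 2 with hn | hn
  · exact polyLe_congr (fun x => by unfold Vpoly; rw [if_pos hn])
      (polyLe_mono (polyLe_zero 0) (by omega))
  · have h1 := polyLe_mul_x (polyLe_mul_x (polyLe_lag ((α:ℝ)+4) (n-2)))
    have h2 := polyLe_const_mul ((1 / ((α:ℝ) + 1)) * (poch ((α:ℝ) + 3) (n - 2) / (Nat.factorial (n - 1) : ℝ)) *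
      (poch ((α:ℝ) + 4) (n - 2) / (Nat.factorial n : ℝ))) h1
    refine polyLe_congr (fun x => ?_) (polyLe_mono h2 (by omega))
    unfold Vpoly
    rw [if_neg (by omega)]
    ring

lemma polyLe_U (α : ℕ) (n : ℕ) : PolyLe (Upoly (α:ℝ) n) n := by
  rcases Nat.lt_or_ge n 2 with hn | hn
  · exact polyLe_congr (fun x => by unfold Upoly; rw [if_pos hn])
      (polyLe_mono (polyLe_zero 0) (by omega))
  · have h1 : PolyLe (fun x : ℝ => (1/((n:ℝ)-1)) * (x * (x * lag ((α:ℝ)+4) (n-2) x))) n := by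
      have := polyLe_const_mul (1/((n:ℝ)-1)) (polyLe_mul_x (polyLe_mul_x (polyLe_lag ((α:ℝ)+4) (n-2))))
      exact polyLe_mono this (by omega)
    have h2 : PolyLe (fun x : ℝ => ((α:ℝ)+2) * (x * lag ((α:ℝ)+2) (n-1) x)) n := by
      have := polyLe_const_mul ((α:ℝ)+2) (polyLe_mul_x (polyLe_lag ((α:ℝ)+2) (n-1)))
      exact polyLe_mono this (by omega)
    have h3 : PolyLe (fun x : ℝ => ((n:ℝ)+(α:ℝ)+1) * lag (α:ℝ) n x) n :=
      polyLe_const_mul _ (polyLe_lag (α:ℝ) n)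
    have h4 := polyLe_const_mul (poch ((α:ℝ) + 3) (n - 2) / (((α:ℝ) + 1) * ((α:ℝ) + 3) * (Nat.factorial (n - 2) : ℝ)))
      (polyLe_sub (polyLe_sub h1 h2) h3)
    refine polyLe_congr (fun x => ?_) h4
    unfold Upoly
    rw [if_neg (by omega)]
    ring

lemma polyLe_sobLag (α : ℕ) (M N : ℝ) (n : ℕ) : PolyLe (sobLag α M N n) n := by
  have h := polyLe_add (polyLe_add (polyLe_add (polyLe_lag (α:ℝ) n)
    (polyLe_const_mul M (polyLe_T α n))) (polyLe_const_mul N (polyLe_U α n)))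
    (polyLe_const_mul (M*N) (polyLe_V α n))
  refine polyLe_congr (fun x => ?_) h
  unfold sobLag
  ring

lemma polyLe_integrable {f : ℝ → ℝ} {D : ℕ} (hf : PolyLe f D) (b : ℕ) :
    MeasureTheory.IntegrableOn (fun x : ℝ => f x * (Real.exp (-x) * x ^ b)) (Set.Ioi 0) := by
  obtain ⟨c, hc⟩ := hf
  have : (fun x : ℝ => f x * (Real.exp (-x) * x ^ b))
      = fun x : ℝ => (∑ i ∈ Finset.range (D+1), c i * x ^ i) * (Real.exp (-x) * x ^ b) := by
    funext x; rw [hc x]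
  rw [this]
  exact integrableOn_sum_weight c (D+1) b

end PolySec

section DecSec
open Set

lemma cast2 (α : ℕ) : (α:ℝ)+2 = ((α+2 : ℕ) : ℝ) := by push_cast; ring
lemma cast4 (α : ℕ) : (α:ℝ)+4 = ((α+4 : ℕ) : ℝ) := by push_cast; ring

lemma intT (α n b : ℕ) (hn : 1 ≤ n) :
    ∫ x in Set.Ioi (0:ℝ), Tpoly (α:ℝ) n x * (Real.exp (-x) * x ^ b)
      = -(poch ((α:ℝ)+2) (n-1) / (Nat.factorial n : ℝ)) * Jint (α+2) (n-1) (b+1) := by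
  unfold Jint
  rw [← MeasureTheory.integral_const_mul]
  refine MeasureTheory.setIntegral_congr_fun measurableSet_Ioi (fun x _ => ?_)
  unfold Tpoly
  rw [if_neg (by omega), ← cast2 α, pow_succ]
  ring

lemma intV (α n b : ℕ) (hn : 2 ≤ n) :
    ∫ x in Set.Ioi (0:ℝ), Vpoly (α:ℝ) n x * (Real.exp (-x) * x ^ b)
      = ((1 / ((α:ℝ) + 1)) * (poch ((α:ℝ) + 3) (n - 2) / (Nat.factorial (n - 1) : ℝ)) *
          (poch ((α:ℝ) + 4) (n - 2) / (Nat.factorial n : ℝ))) * Jint (α+4) (n-2) (b+2) := by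
  unfold Jint
  rw [← MeasureTheory.integral_const_mul]
  refine MeasureTheory.setIntegral_congr_fun measurableSet_Ioi (fun x _ => ?_)
  unfold Vpoly
  rw [if_neg (by omega), ← cast4 α, pow_add]
  ring

lemma intU (α n b : ℕ) (hn : 2 ≤ n) :
    ∫ x in Set.Ioi (0:ℝ), Upoly (α:ℝ) n x * (Real.exp (-x) * x ^ b)
      = (poch ((α:ℝ) + 3) (n - 2) / (((α:ℝ) + 1) * ((α:ℝ) + 3) * (Nat.factorial (n - 2) : ℝ))) *
        ((1/((n:ℝ)-1)) * Jint (α+4) (n-2) (b+2)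
          - ((α:ℝ)+2) * Jint (α+2) (n-1) (b+1)
          - ((n:ℝ)+(α:ℝ)+1) * Jint α n b) := by
  have i1 : MeasureTheory.IntegrableOn
      (fun x : ℝ => (1/((n:ℝ)-1)) * (lag ((α+4:ℕ):ℝ) (n-2) x * (Real.exp (-x) * x ^ (b+2)))) (Set.Ioi 0) :=
    (integrableOn_lag_weight _ _ _).const_mul _
  have i2 : MeasureTheory.IntegrableOn
      (fun x : ℝ => ((α:ℝ)+2) * (lag ((α+2:ℕ):ℝ) (n-1) x * (Real.exp (-x) * x ^ (b+1)))) (Set.Ioi 0) :=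
    (integrableOn_lag_weight _ _ _).const_mul _
  have i3 : MeasureTheory.IntegrableOn
      (fun x : ℝ => ((n:ℝ)+(α:ℝ)+1) * (lag ((α:ℕ):ℝ) n x * (Real.exp (-x) * x ^ b))) (Set.Ioi 0) :=
    (integrableOn_lag_weight _ _ _).const_mul _
  have hpt : ∀ x ∈ Set.Ioi (0:ℝ), Upoly (α:ℝ) n x * (Real.exp (-x) * x ^ b)
      = (poch ((α:ℝ) + 3) (n - 2) / (((α:ℝ) + 1) * ((α:ℝ) + 3) * (Nat.factorial (n - 2) : ℝ))) *
        ((1/((n:ℝ)-1)) * (lag ((α+4:ℕ):ℝ) (n-2) x * (Real.exp (-x) * x ^ (b+2)))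
          - ((α:ℝ)+2) * (lag ((α+2:ℕ):ℝ) (n-1) x * (Real.exp (-x) * x ^ (b+1)))
          - ((n:ℝ)+(α:ℝ)+1) * (lag ((α:ℕ):ℝ) n x * (Real.exp (-x) * x ^ b))) := by
    intro x _
    unfold Upoly
    rw [if_neg (by omega), ← cast2 α, ← cast4 α, pow_add, pow_succ]
    field_simp
    ring
  rw [MeasureTheory.setIntegral_congr_fun measurableSet_Ioi hpt]
  rw [MeasureTheory.integral_const_mul]
  congr 1
  have i12 : MeasureTheory.IntegrableOn
      (fun x : ℝ => (1/((n:ℝ)-1)) * (lag ((α+4:ℕ):ℝ) (n-2) x * (Real.exp (-x) * x ^ (b+2)))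
        - ((α:ℝ)+2) * (lag ((α+2:ℕ):ℝ) (n-1) x * (Real.exp (-x) * x ^ (b+1)))) (Set.Ioi 0) := i1.sub i2
  rw [MeasureTheory.integral_sub i12 i3, MeasureTheory.integral_sub i1 i2]
  unfold Jint
  rw [MeasureTheory.integral_const_mul, MeasureTheory.integral_const_mul, MeasureTheory.integral_const_mul]

lemma int_sobLag (α : ℕ) (M N : ℝ) (n b : ℕ) :
    ∫ x in Set.Ioi (0:ℝ), sobLag α M N n x * (Real.exp (-x) * x ^ b)
      = (∫ x in Set.Ioi (0:ℝ), lag (α:ℝ) n x * (Real.exp (-x) * x ^ b))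
        + M * (∫ x in Set.Ioi (0:ℝ), Tpoly (α:ℝ) n x * (Real.exp (-x) * x ^ b))
        + N * (∫ x in Set.Ioi (0:ℝ), Upoly (α:ℝ) n x * (Real.exp (-x) * x ^ b))
        + M * N * (∫ x in Set.Ioi (0:ℝ), Vpoly (α:ℝ) n x * (Real.exp (-x) * x ^ b)) := by
  have iL := polyLe_integrable (polyLe_lag (α:ℝ) n) b
  have iT := (polyLe_integrable (polyLe_T α n) b).const_mul M
  have iU := (polyLe_integrable (polyLe_U α n) b).const_mul N
  have iV := (polyLe_integrable (polyLe_V α n) b).const_mul (M*N)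
  have hpt : ∀ x ∈ Set.Ioi (0:ℝ), sobLag α M N n x * (Real.exp (-x) * x ^ b)
      = (lag (α:ℝ) n x * (Real.exp (-x) * x ^ b))
        + M * (Tpoly (α:ℝ) n x * (Real.exp (-x) * x ^ b))
        + N * (Upoly (α:ℝ) n x * (Real.exp (-x) * x ^ b))
        + M * N * (Vpoly (α:ℝ) n x * (Real.exp (-x) * x ^ b)) := by
    intro x _
    unfold sobLag
    ring
  rw [MeasureTheory.setIntegral_congr_fun measurableSet_Ioi hpt]
  have i12 : MeasureTheory.IntegrableOn (fun x : ℝ => lag (α:ℝ) n x * (Real.exp (-x) * x ^ b)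
      + M * (Tpoly (α:ℝ) n x * (Real.exp (-x) * x ^ b))) (Set.Ioi 0) := iL.add iT
  have i123 : MeasureTheory.IntegrableOn (fun x : ℝ => lag (α:ℝ) n x * (Real.exp (-x) * x ^ b)
      + M * (Tpoly (α:ℝ) n x * (Real.exp (-x) * x ^ b))
      + N * (Upoly (α:ℝ) n x * (Real.exp (-x) * x ^ b))) (Set.Ioi 0) := i12.add iU
  rw [MeasureTheory.integral_add i123 iV,
    MeasureTheory.integral_add i12 iU,
    MeasureTheory.integral_add iL iT,
    MeasureTheory.integral_const_mul, MeasureTheory.integral_const_mul, MeasureTheory.integral_const_mul]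

lemma ipSob_mono_repr (α : ℕ) (M N : ℝ) (n k : ℕ) :
    ipSob α M N (sobLag α M N n) (fun x => x ^ k)
      = (1/(Nat.factorial α : ℝ)) * ((Jint α n (α+k))
          + M * (∫ x in Set.Ioi (0:ℝ), Tpoly (α:ℝ) n x * (Real.exp (-x) * x ^ (α+k)))
          + N * (∫ x in Set.Ioi (0:ℝ), Upoly (α:ℝ) n x * (Real.exp (-x) * x ^ (α+k)))
          + M * N * (∫ x in Set.Ioi (0:ℝ), Vpoly (α:ℝ) n x * (Real.exp (-x) * x ^ (α+k))))
        + M * sobLag α M N n 0 * 0 ^ k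
        + N * deriv (sobLag α M N n) 0 * (k * (0:ℝ) ^ (k-1)) := by
  unfold ipSob ipW
  have hg0 : (fun x : ℝ => x ^ k) 0 = (0:ℝ) ^ k := rfl
  have hg1 : deriv (fun x : ℝ => x ^ k) 0 = (k : ℝ) * (0:ℝ) ^ (k-1) := (hasDerivAt_pow k 0).deriv
  rw [hg0, hg1]
  have hw : ∀ x ∈ Set.Ioi (0:ℝ), sobLag α M N n x * x ^ k * Real.exp (-x) * x ^ α
      = sobLag α M N n x * (Real.exp (-x) * x ^ (α+k)) := by
    intro x _
    rw [pow_add]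
    ring
  rw [MeasureTheory.setIntegral_congr_fun measurableSet_Ioi hw, int_sobLag]
  unfold Jint
  ring

end DecSec

section ValSec
open Set

lemma Upoly_one_zero (α : ℕ) : Upoly (α:ℝ) 1 0 = 0 := by
  unfold Upoly
  rw [if_pos (by omega)]

lemma sobLag_zero_two (α : ℕ) (M N : ℝ) (p : ℕ) :
    sobLag α M N (p+2) 0
      = poch ((α:ℝ)+1) (p+2) / (Nat.factorial (p+2) : ℝ)
        + N * ((poch ((α:ℝ) + 3) p / (((α:ℝ) + 1) * ((α:ℝ) + 3) * (Nat.factorial p : ℝ)))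
          * (-(((p+2 : ℝ) + α + 1) * (poch ((α:ℝ)+1) (p+2) / (Nat.factorial (p+2) : ℝ))))) := by
  unfold sobLag
  rw [Tpoly_zero_val, Vpoly_zero_val, Upoly_zero_val (α:ℝ) (p+2) (by omega), lag_zero]
  simp only [show p+2-2 = p from by omega]
  push_cast
  ring

lemma sobLag_zero_one (α : ℕ) (M N : ℝ) :
    sobLag α M N 1 0 = poch ((α:ℝ)+1) 1 / (Nat.factorial 1 : ℝ) := by
  unfold sobLag
  rw [Tpoly_zero_val, Vpoly_zero_val, Upoly_one_zero, lag_zero]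
  ring

lemma deriv_sobLag_two (α : ℕ) (M N : ℝ) (p : ℕ) :
    deriv (sobLag α M N (p+2)) 0
      = deriv (lag (α:ℝ) (p+2)) 0
        + M * (-(poch ((α:ℝ) + 2) (p+1) / (Nat.factorial (p+2) : ℝ)) * lag ((α:ℝ)+2) (p+1) 0)
        + N * ((poch ((α:ℝ) + 3) p / (((α:ℝ) + 1) * ((α:ℝ) + 3) * (Nat.factorial p : ℝ))) *
            (0 - ((α:ℝ) + 2) * lag ((α:ℝ)+2) (p+1) 0
              - (((p+2:ℕ) : ℝ) + (α:ℝ) + 1) * deriv (lag (α:ℝ) (p+2)) 0)) := by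
  have hL := (differentiable_lag (α:ℝ) (p+2) 0).hasDerivAt
  have hT := hasDerivAt_T_zero (α:ℝ) (p+2) (by omega)
  have hU := hasDerivAt_U_zero (α:ℝ) (p+2) (by omega)
  have hV := hasDerivAt_V_zero (α:ℝ) (p+2)
  have h := ((hL.fun_add (hT.const_mul M)).fun_add (hU.const_mul N)).fun_add (hV.const_mul (M*N))
  have heq : (fun x => lag (α:ℝ) (p+2) x + M * Tpoly (α:ℝ) (p+2) x
      + N * Upoly (α:ℝ) (p+2) x + M*N*Vpoly (α:ℝ) (p+2) x) = sobLag α M N (p+2) := by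
    funext x
    unfold sobLag
    ring
  rw [heq] at h
  rw [h.deriv]
  simp only [show p+2-1 = p+1 from by omega, show p+2-2 = p from by omega]
  ring

end ValSec

section KeySec
open Set

set_option maxHeartbeats 2000000 in
lemma KEY (α : ℕ) (M N : ℝ) (n k : ℕ) (hk : k < n) :
    ipSob α M N (sobLag α M N n) (fun x => x ^ k) = 0 := by
  rw [ipSob_mono_repr]
  rcases Nat.lt_or_ge n 2 with hn2 | hn2
  · -- n = 1, k = 0
    have hn1 : n = 1 := by omega
    have hk0 : k = 0 := by omega
    subst hn1; subst hk0
    rw [intT α 1 (α+0) (by omega)]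
    have hU : ∀ x ∈ Set.Ioi (0:ℝ), Upoly (α:ℝ) 1 x * (Real.exp (-x) * x ^ (α+0)) = 0 := by
      intro x _
      unfold Upoly
      rw [if_pos (by omega)]
      ring
    have hV : ∀ x ∈ Set.Ioi (0:ℝ), Vpoly (α:ℝ) 1 x * (Real.exp (-x) * x ^ (α+0)) = 0 := by
      intro x _
      unfold Vpoly
      rw [if_pos (by omega)]
      ring
    rw [MeasureTheory.setIntegral_congr_fun measurableSet_Ioi hU]
    rw [MeasureTheory.setIntegral_congr_fun measurableSet_Ioi hV]
    rw [MeasureTheory.integral_zero]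
    have j0 : Jint α 1 (α+0) = 0 := J_zero α 1 (α+0) (by omega) (by omega)
    have j1 : Jint (α+2) (1-1) (α+0+1) = (Nat.factorial (α+1) : ℝ) := by
      rw [show α+2 = (α+1)+1 from by omega, show α+0+1 = α+1 from by omega]
      exact J_a1 (α+1) (1-1)
    rw [j0, j1, sobLag_zero_one]
    simp only [show (1:ℕ)-1 = 0 from rfl, poch_zero]
    rw [poch_nat_div α 1]
    have f1 : (Nat.factorial (α+1) : ℝ) = ((α:ℝ)+1) * (Nat.factorial α : ℝ) := by
      rw [Nat.factorial_succ]; push_cast; ring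
    rw [f1]
    have h0 := fact_ne α
    norm_num
    ring
  · obtain ⟨p, rfl⟩ : ∃ p, n = p + 2 := ⟨n - 2, by omega⟩
    rw [intT α (p+2) (α+k) (by omega), intU α (p+2) (α+k) (by omega),
      intV α (p+2) (α+k) (by omega)]
    simp only [show p+2-1 = p+1 from by omega, show p+2-2 = p from by omega]
    -- poch conversions
    have hp1 : poch ((α:ℝ)+1) (p+2) = (Nat.factorial (α+p+2) : ℝ) / (Nat.factorial α : ℝ) := by
      rw [poch_nat_div α (p+2), show α+(p+2) = α+p+2 from by omega]
    have hp2 : poch ((α:ℝ)+2) (p+1) = (Nat.factorial (α+p+2) : ℝ) / (Nat.factorial (α+1) : ℝ) := by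
      rw [show (α:ℝ)+2 = ((α+1:ℕ):ℝ)+1 from by push_cast; ring, poch_nat_div (α+1) (p+1),
        show (α+1)+(p+1) = α+p+2 from by omega]
    have hp3 : poch ((α:ℝ)+3) p = (Nat.factorial (α+p+2) : ℝ) / (Nat.factorial (α+2) : ℝ) := by
      rw [show (α:ℝ)+3 = ((α+2:ℕ):ℝ)+1 from by push_cast; ring, poch_nat_div (α+2) p,
        show (α+2)+p = α+p+2 from by omega]
    have hp3' : poch ((α:ℝ)+3) (p+1) = (Nat.factorial (α+p+3) : ℝ) / (Nat.factorial (α+2) : ℝ) := by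
      rw [show (α:ℝ)+3 = ((α+2:ℕ):ℝ)+1 from by push_cast; ring, poch_nat_div (α+2) (p+1),
        show (α+2)+(p+1) = α+p+3 from by omega]
    have hp4 : poch ((α:ℝ)+4) p = (Nat.factorial (α+p+3) : ℝ) / (Nat.factorial (α+3) : ℝ) := by
      rw [show (α:ℝ)+4 = ((α+3:ℕ):ℝ)+1 from by push_cast; ring, poch_nat_div (α+3) p,
        show (α+3)+p = α+p+3 from by omega]
    -- factorial expansions
    have f1 : (Nat.factorial (α+1) : ℝ) = ((α:ℝ)+1) * (Nat.factorial α : ℝ) := by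
      rw [Nat.factorial_succ]; push_cast; ring
    have f2 : (Nat.factorial (α+2) : ℝ) = ((α:ℝ)+2) * (Nat.factorial (α+1) : ℝ) := by
      rw [show α+2 = (α+1)+1 from by omega, Nat.factorial_succ]; push_cast; ring
    have f3 : (Nat.factorial (α+3) : ℝ) = ((α:ℝ)+3) * (Nat.factorial (α+2) : ℝ) := by
      rw [show α+3 = (α+2)+1 from by omega, Nat.factorial_succ]; push_cast; ring
    have f4 : (Nat.factorial (α+p+3) : ℝ) = ((α:ℝ)+(p:ℝ)+3) * (Nat.factorial (α+p+2) : ℝ) := by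
      rw [show α+p+3 = (α+p+2)+1 from by omega, Nat.factorial_succ]; push_cast; ring
    have f5 : (Nat.factorial (p+1) : ℝ) = ((p:ℝ)+1) * (Nat.factorial p : ℝ) := by
      rw [Nat.factorial_succ]; push_cast; ring
    have f6 : (Nat.factorial (p+2) : ℝ) = ((p:ℝ)+2) * (Nat.factorial (p+1) : ℝ) := by
      rw [show p+2 = (p+1)+1 from by omega, Nat.factorial_succ]; push_cast; ring
    have e0 := fact_ne α
    have e1 := fact_ne p
    have e2 := fact_ne (α+p+2)
    have g1 : ((α:ℝ)+1) ≠ 0 := by positivity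
    have g3 : ((α:ℝ)+3) ≠ 0 := by positivity
    have g5 : ((p:ℝ)+1) ≠ 0 := by positivity
    have g6 : ((p:ℝ)+2) ≠ 0 := by positivity
    match k, hk with
    | 0, _ =>
      have j0 : Jint α (p+2) (α+0) = 0 := J_zero α (p+2) (α+0) (by omega) (by omega)
      have j1 : Jint (α+2) (p+1) (α+0+1) = (Nat.factorial (α+1) : ℝ) := by
        rw [show α+2 = (α+1)+1 from by omega, show α+0+1 = α+1 from by omega]
        exact J_a1 (α+1) (p+1)
      have j2 : Jint (α+4) p (α+0+2) = (Nat.factorial (α+2) : ℝ) * ((p:ℝ)+1) := by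
        rw [show α+4 = (α+2)+2 from by omega, show α+0+2 = α+2 from by omega]
        exact J_a2 (α+2) p
      rw [j0, j1, j2, sobLag_zero_two]
      rw [hp1, hp2, hp3, hp4]
      rw [f4, f3, f2, f1, f6, f5]
      simp only [pow_zero, Nat.cast_zero, zero_mul, mul_zero, mul_one, add_zero, zero_add]
      push_cast
      rw [show (p:ℝ)+2-1 = (p:ℝ)+1 from by ring]
      field_simp
      ring
    | 1, _ =>
      have j0 : Jint α (p+2) (α+1) = 0 := J_zero α (p+2) (α+1) (by omega) (by omega)
      have j1 : Jint (α+2) (p+1) (α+1+1) = 0 := by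
        refine J_zero (α+2) (p+1) (α+1+1) (by omega) (by omega)
      have j2 : Jint (α+4) p (α+1+2) = (Nat.factorial (α+3) : ℝ) := by
        rw [show α+4 = (α+3)+1 from by omega, show α+1+2 = α+3 from by omega]
        exact J_a1 (α+3) p
      rw [j0, j1, j2, deriv_sobLag_two]
      rw [deriv_lag_zero (α:ℝ) (p+2) (by omega), lag_zero ((α:ℝ)+2) (p+1)]
      simp only [show p+2-1 = p+1 from by omega]
      rw [show (α:ℝ)+2+1 = (α:ℝ)+3 from by ring]
      rw [hp2, hp3, hp3', hp4]
      rw [f4, f3, f2, f1, f6, f5]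
      simp only [pow_one, Nat.cast_one, pow_zero, mul_one, mul_zero, add_zero]
      push_cast
      rw [show (p:ℝ)+2-1 = (p:ℝ)+1 from by ring]
      field_simp
      ring
    | (k+2), _ =>
      have j0 : Jint α (p+2) (α+(k+2)) = 0 := J_zero α (p+2) _ (by omega) (by omega)
      have j1 : Jint (α+2) (p+1) (α+(k+2)+1) = 0 := J_zero (α+2) (p+1) _ (by omega) (by omega)
      have j2 : Jint (α+4) p (α+(k+2)+2) = 0 := J_zero (α+4) p _ (by omega) (by omega)
      rw [j0, j1, j2]
      have hz1 : (0:ℝ) ^ (k+2) = 0 := zero_pow (by omega)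
      have hz2 : (0:ℝ) ^ (k+2-1) = 0 := zero_pow (by omega)
      rw [hz1, hz2]
      ring

end KeySec

section FinSec
open Set

lemma ipSob_symm (α : ℕ) (M N : ℝ) (f g : ℝ → ℝ) : ipSob α M N f g = ipSob α M N g f := by
  unfold ipSob ipW
  have h : ∫ x in Set.Ioi (0:ℝ), f x * g x * Real.exp (-x) * x ^ α
      = ∫ x in Set.Ioi (0:ℝ), g x * f x * Real.exp (-x) * x ^ α := by
    refine MeasureTheory.setIntegral_congr_fun measurableSet_Ioi (fun x _ => ?_)
    ring
  rw [h]
  ring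

set_option maxHeartbeats 1000000 in
lemma ipSob_sum (α : ℕ) (M N : ℝ) (n : ℕ) (c : ℕ → ℝ) (E : ℕ) :
    ipSob α M N (sobLag α M N n) (fun x => ∑ k ∈ Finset.range E, c k * x ^ k)
      = ∑ k ∈ Finset.range E, c k * ipSob α M N (sobLag α M N n) (fun x => x ^ k) := by
  set f := sobLag α M N n with hf
  have hint : ∀ k : ℕ, MeasureTheory.IntegrableOn
      (fun x : ℝ => f x * x ^ k * Real.exp (-x) * x ^ α) (Set.Ioi 0) := by
    intro k
    have heq : (fun x : ℝ => f x * x ^ k * Real.exp (-x) * x ^ α)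
        = (fun x : ℝ => f x * (Real.exp (-x) * x ^ (α+k))) := by
      funext x
      rw [pow_add]
      ring
    rw [heq]
    exact polyLe_integrable (polyLe_sobLag α M N n) (α+k)
  unfold ipSob ipW
  have hg0 : (fun x : ℝ => ∑ k ∈ Finset.range E, c k * x ^ k) 0
      = ∑ k ∈ Finset.range E, c k * (0:ℝ) ^ k := by simp only
  have hg1 : deriv (fun x : ℝ => ∑ k ∈ Finset.range E, c k * x ^ k) 0
      = ∑ k ∈ Finset.range E, c k * ((k:ℝ) * (0:ℝ) ^ (k-1)) := by
    exact (HasDerivAt.fun_sum (fun k _ => (hasDerivAt_pow k (0:ℝ)).const_mul (c k))).deriv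
  have hgk : ∀ k : ℕ, deriv (fun x : ℝ => x ^ k) 0 = (k:ℝ) * (0:ℝ) ^ (k-1) :=
    fun k => (hasDerivAt_pow k 0).deriv
  have hpt : ∀ x ∈ Set.Ioi (0:ℝ), f x * (∑ k ∈ Finset.range E, c k * x ^ k) * Real.exp (-x) * x ^ α
      = ∑ k ∈ Finset.range E, c k * (f x * x ^ k * Real.exp (-x) * x ^ α) := by
    intro x _
    rw [Finset.mul_sum, Finset.sum_mul, Finset.sum_mul]
    exact Finset.sum_congr rfl (fun k _ => by ring)
  rw [MeasureTheory.setIntegral_congr_fun measurableSet_Ioi hpt,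
    MeasureTheory.integral_finset_sum _ (fun k _ => ((hint k).const_mul (c k))),
    hg0, hg1]
  simp only [MeasureTheory.integral_const_mul, hgk]
  rw [Finset.mul_sum, Finset.mul_sum]
  have hM : M * f 0 * ∑ k ∈ Finset.range E, c k * (0:ℝ) ^ k
      = ∑ k ∈ Finset.range E, M * f 0 * (c k * (0:ℝ) ^ k) := by
    rw [Finset.mul_sum]
  have hN : N * deriv f 0 * ∑ k ∈ Finset.range E, c k * ((k:ℝ) * (0:ℝ) ^ (k-1))
      = ∑ k ∈ Finset.range E, N * deriv f 0 * (c k * ((k:ℝ) * (0:ℝ) ^ (k-1))) := by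
    rw [Finset.mul_sum]
  rw [hN, ← Finset.sum_add_distrib, ← Finset.sum_add_distrib]
  exact Finset.sum_congr rfl (fun k _ => by ring)

lemma MAIN (α : ℕ) (M N : ℝ) (n m : ℕ) (hmn : m < n) :
    ipSob α M N (sobLag α M N n) (sobLag α M N m) = 0 := by
  obtain ⟨c, hc⟩ := polyLe_sobLag α M N m
  have hfun : sobLag α M N m = fun x => ∑ k ∈ Finset.range (m+1), c k * x ^ k := funext hc
  rw [hfun, ipSob_sum]
  refine Finset.sum_eq_zero (fun k hk => ?_)
  rw [KEY α M N n k (by have := Finset.mem_range.mp hk; omega), mul_zero]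

end FinSec








/-- Orthogonality of the Sobolev-Laguerre polynomials. -/
theorem sobolev_laguerre_orthogonality (α : ℕ) (M N : ℝ) (hM : 0 ≤ M) (hN : 0 < N)
    (n m : ℕ) (hnm : n ≠ m) :
    ipSob α M N (sobLag α M N n) (sobLag α M N m) = 0 := by
  rcases lt_trichotomy n m with h | h | h
  · rw [ipSob_symm]
    exact MAIN α M N m n h
  · exact absurd h hnm
  · exact MAIN α M N n m h

end
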